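/- arXiv:2304.07118 — 3 statements merged into one kernel-verified Lean document; each statement's English description precedes it below -/
import Mathlib

section
/- Under the su(N) generator hypotheses, for all i, j, k, l ∈ Fin N: Σ_{a : Fin (N^2 − 1)} (T a) i j · (T a) k l = (1/2) · δ_{i l} · δ_{j k} − (1/(2·N)) · δ_{i j} · δ_{k l}, where δ is the Kronecker delta. -/
/-!
Adjoining the identity to the generators gives `N ^ 2` matrices `1, T a` whose trace-dual family
is `N⁻¹ • 1, 2 • T a`. Any two trace-dual families `B, D` of `n ^ 2` matrices of size `n` satisfy
`∑ a, (D a) i j * (B a) k l = δ_{il} δ_{jk}`, and in the su(N) case the identity term of this sum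
is the `(1 / 2N) δ_{ij} δ_{kl}` correction.
-/

open Matrix

/-- Trace duality says `P * Q = 1` for the square coefficient matrices of the two families,
hence `Q * P = 1`, which is the completeness relation entrywise. -/
theorem Matrix.sum_apply_mul_apply_of_trace_mul_eq_ite {κ n R : Type*} [Fintype κ] [DecidableEq κ]
    [Fintype n] [DecidableEq n] [Semiring R] [IsStablyFiniteRing R] (B D : κ → Matrix n n R)
    (hcard : Fintype.card κ = Fintype.card n * Fintype.card n)
    (hdual : ∀ a b, (B a * D b).trace = if a = b then 1 else 0) (i j k l : n) :
    ∑ a, D a i j * B a k l = if i = l ∧ j = k then 1 else 0 := by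
  let P : Matrix κ (n × n) R := of fun a p => B a p.1 p.2
  let Q : Matrix (n × n) κ R := of fun p b => D b p.2 p.1
  have hPQ : P * Q = 1 := by
    ext a b
    rw [one_apply, ← hdual, mul_apply, Fintype.sum_prod_type, trace]
    simp [P, Q, mul_apply]
  have hQP : Q * P = 1 := (mul_eq_one_comm_of_card_eq _ _ _ (by simp [hcard])).mp hPQ
  simpa [P, Q, mul_apply, one_apply, and_comm, eq_comm] using congr_fun (congr_fun hQP (j, i)) (k, l)

theorem Matrix.trace_mul_option_elim_eq_ite {ι n K : Type*} [DecidableEq ι] [Fintype n]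
    [DecidableEq n] [Nonempty n] [Field K] [CharZero K] (T : ι → Matrix n n K)
    (htr : ∀ a, (T a).trace = 0)
    (horth : ∀ a b, (T a * T b).trace = if a = b then (1 / 2 : K) else 0) (o o' : Option ι) :
    (o.elim 1 T * o'.elim ((Fintype.card n : K)⁻¹ • 1) (fun b => (2 : K) • T b)).trace =
      if o = o' then 1 else 0 := by
  rcases o with _ | a <;> rcases o' with _ | b
  · simp
  · simp [htr]
  · simp [htr]
  · simp [horth]

theorem suN_completeness_general (N : ℕ)
    (T : Fin (N ^ 2 - 1) → Matrix (Fin N) (Fin N) ℂ)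
    (htr : ∀ a, (T a).trace = 0)
    (horth : ∀ a b, (T a * T b).trace = if a = b then (1 / 2 : ℂ) else 0)
    (i j k l : Fin N) :
    ∑ a, T a i j * T a k l =
      (1 / 2 : ℂ) * (if i = l then 1 else 0) * (if j = k then 1 else 0)
        - (1 / (2 * (N : ℂ))) * (if i = j then 1 else 0) * (if k = l then 1 else 0) := by
  have : Nonempty (Fin N) := ⟨i⟩
  have hcard : Fintype.card (Option (Fin (N ^ 2 - 1))) =
      Fintype.card (Fin N) * Fintype.card (Fin N) := by
    simp [← sq, Nat.sub_add_cancel (Nat.one_le_pow _ _ (Fin.pos i))]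
  have key := Matrix.sum_apply_mul_apply_of_trace_mul_eq_ite _ _ hcard
    (Matrix.trace_mul_option_elim_eq_ite T htr horth) i j k l
  simp only [Fintype.sum_option, Option.elim, Matrix.smul_apply, smul_eq_mul, one_apply,
    Fintype.card_fin, mul_assoc, ← Finset.mul_sum] at key
  rw [mul_assoc (1 / 2 : ℂ), ite_zero_mul_ite_zero, one_mul]
  linear_combination key / 2

/-- **Completeness relation for su(N) generators.**
For orthonormalized traceless Hermitian generators `T a` of su(N),
`∑ a, (T a) i j * (T a) k l = (1/2) δ_{il} δ_{jk} − (1/(2N)) δ_{ij} δ_{kl}`. -/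
theorem suN_completeness (N : ℕ) (hN : 2 ≤ N)
    (T : Fin (N ^ 2 - 1) → Matrix (Fin N) (Fin N) ℂ)
    (htr : ∀ a, (T a).trace = 0)
    (hherm : ∀ a, (T a)ᴴ = T a)
    (horth : ∀ a b, (T a * T b).trace = if a = b then (1 / 2 : ℂ) else 0)
    (i j k l : Fin N) :
    ∑ a, T a i j * T a k l =
      (1 / 2 : ℂ) * (if i = l then 1 else 0) * (if j = k then 1 else 0)
        - (1 / (2 * (N : ℂ))) * (if i = j then 1 else 0) * (if k = l then 1 else 0) :=
  suN_completeness_general N T htr horth i j k l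
end

section
/- Under the su(N) generator hypotheses, define the structure constants f a b c := −2·i·trace ((T a * T b − T b * T a) * T c). Then for all i₁, i₂, i₃, j₁, j₂, j₃ ∈ Fin N: Σ_{a,b,c : Fin (N^2 − 1)} f a b c · (T a) i₁ j₁ · (T b) i₂ j₂ · (T c) i₃ j₃ = (i/4) · (δ_{i₁ j₃} · δ_{i₂ j₁} · δ_{i₃ j₂} − δ_{i₁ j₂} · δ_{i₂ j₃} · δ_{i₃ j₁}), where δ is the Kronecker delta. -/
/-!
The family `{T a} ∪ {1}` is orthogonal for the trace form `(X, Y) ↦ tr (X * Y)`, with nonzero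
norms `1/2` and `N`, and it has `N²` members, so it is a basis of all `N × N` matrices. Expanding
in it gives the completeness relation `∑ₐ (T a)ᵢⱼ (T a)ₖₗ = ½ (δᵢₗ δⱼₖ - δᵢⱼ δₖₗ / N)`, i.e.
`∑ₐ tr (M T a) T a = ½ (M - tr M / N)`. Contracting `c` with this turns `∑_c f a b c T c` into
`-i [T a, T b]`; then `∑ₐ (T a)ᵢⱼ T a = ½ (E_ji - δᵢⱼ / N)`, and the scalar parts drop out of
the commutator, leaving `-i/4 [E_{j₁i₁}, E_{j₂i₂}]`, whose entries are the stated deltas.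
-/

open Matrix

/-- The antisymmetric structure constants `f a b c = −2i·Tr([T a, T b]·T c)`. -/
noncomputable def fConst {N : ℕ} (T : Fin (N ^ 2 - 1) → Matrix (Fin N) (Fin N) ℂ)
    (a b c : Fin (N ^ 2 - 1)) : ℂ :=
  -2 * Complex.I * ((T a * T b - T b * T a) * T c).trace

theorem commutator_sub_smul_one {R A : Type*} [CommRing R] [Ring A] [Algebra R A]
    (x y : A) (s t : R) :
    (x - s • 1) * (y - t • 1) - (y - t • 1) * (x - s • 1) = x * y - y * x := by
  simp only [sub_mul, mul_sub, smul_mul_assoc, mul_smul_comm, one_mul, mul_one]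
  module

theorem commutator_sum_smul_sum_smul {R A ι κ : Type*} [CommSemiring R] [Ring A]
    [Algebra R A] (s : Finset ι) (t : Finset κ) (x : ι → R) (y : κ → R) (u : ι → A)
    (v : κ → A) :
    (∑ a ∈ s, x a • u a) * (∑ b ∈ t, y b • v b) - (∑ b ∈ t, y b • v b) * (∑ a ∈ s, x a • u a) =
      ∑ a ∈ s, ∑ b ∈ t, (x a * y b) • (u a * v b - v b * u a) := by
  rw [Finset.sum_mul_sum, Finset.sum_mul_sum, Finset.sum_comm (s := t),
    ← Finset.sum_sub_distrib]
  simp only [← Finset.sum_sub_distrib, smul_mul_smul_comm, smul_sub, mul_comm (y _)]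

theorem single_mul_single_apply {l m n α : Type*} [DecidableEq l] [DecidableEq m]
    [DecidableEq n] [Fintype m] [NonUnitalNonAssocSemiring α]
    (i : l) (j k : m) (p : n) (a : l) (b : n) (c d : α) :
    (single i j c * single k p d) a b = if i = a ∧ j = k ∧ p = b then c * d else 0 := by
  by_cases hjk : j = k
  · subst hjk
    simp [single_apply]
  · simp [hjk]

section Completeness

variable {𝕜 ι n : Type*} [Field 𝕜] [CharZero 𝕜] [Fintype ι] [DecidableEq ι] [Fintype n]
  [DecidableEq n] {T : ι → Matrix n n 𝕜}

theorem sum_apply_mul_apply_of_orthonormal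
    (hcard : Fintype.card ι + 1 = Fintype.card n ^ 2) (htr : ∀ a, (T a).trace = 0)
    (horth : ∀ a b, (T a * T b).trace = if a = b then (1 / 2 : 𝕜) else 0) (i j k l : n) :
    ∑ a, T a i j * T a k l =
      2⁻¹ * ((if i = l then 1 else 0) * (if j = k then 1 else 0)
        - (Fintype.card n : 𝕜)⁻¹ * (if i = j then 1 else 0) * (if k = l then 1 else 0)) := by
  have hn : (Fintype.card n : 𝕜) ≠ 0 := by
    have : Fintype.card n ≠ 0 := by rintro h; simp [h] at hcard
    exact_mod_cast this
  let e : ι ⊕ Unit → Matrix n n 𝕜 := Sum.elim T fun _ ↦ 1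
  let w : ι ⊕ Unit → 𝕜 := Sum.elim (fun _ ↦ 2) fun _ ↦ (Fintype.card n : 𝕜)⁻¹
  have he : ∀ r s, w s * (e r * e s).trace = if r = s then 1 else 0 := by
    rintro (a | _) (b | _) <;> simp [e, w, horth, htr, hn]
  -- Orthonormality of `e` says `U * V = 1`; `U` is square, so also `V * U = 1`: the claim.
  let U : Matrix (ι ⊕ Unit) (n × n) 𝕜 := of fun r p ↦ e r p.1 p.2
  let V : Matrix (n × n) (ι ⊕ Unit) 𝕜 := of fun p r ↦ w r * e r p.2 p.1
  have hUV : U * V = 1 := by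
    ext r s
    rw [one_apply, ← he, trace, mul_apply, Fintype.sum_prod_type, Finset.mul_sum]
    simp only [diag, mul_apply, Finset.mul_sum]
    refine Finset.sum_congr rfl fun x _ ↦ Finset.sum_congr rfl fun y _ ↦ ?_
    simp only [U, V, of_apply]
    ring
  have hVU := congrFun₂ ((mul_eq_one_comm_of_equiv
    (Fintype.equivOfCardEq (by simpa [sq] using hcard))).1 hUV) (j, i) (k, l)
  simp only [V, U, e, w, mul_apply, of_apply, Fintype.sum_sum_type, Sum.elim_inl, Sum.elim_inr,
    Finset.univ_unique, Finset.sum_singleton, one_apply, Prod.mk.injEq, mul_one, mul_ite, mul_zero,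
    mul_assoc, ← Finset.mul_sum] at hVU
  split_ifs at hVU ⊢ <;> simp_all <;> linear_combination hVU / 2

theorem sum_trace_mul_smul_of_orthonormal
    (hcard : Fintype.card ι + 1 = Fintype.card n ^ 2) (htr : ∀ a, (T a).trace = 0)
    (horth : ∀ a b, (T a * T b).trace = if a = b then (1 / 2 : 𝕜) else 0) (M : Matrix n n 𝕜) :
    ∑ a, (M * T a).trace • T a =
      (2⁻¹ : 𝕜) • (M - ((Fintype.card n : 𝕜)⁻¹ * M.trace) • 1) := by
  ext i j
  have hM : ∀ a, (M * T a).trace * T a i j = ∑ p, ∑ q, M p q * (T a q p * T a i j) := by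
    intro a
    simp only [trace, diag, mul_apply, Finset.sum_mul, mul_assoc]
  simp only [Matrix.sum_apply, Matrix.smul_apply, smul_eq_mul, hM]
  rw [Finset.sum_comm]
  simp_rw [Finset.sum_comm (γ := ι), ← Finset.mul_sum,
    sum_apply_mul_apply_of_orthonormal hcard htr horth]
  simp only [trace, diag_apply, Matrix.sub_apply, Matrix.smul_apply, one_apply, smul_eq_mul,
    mul_ite, mul_one, mul_zero, mul_sub, Finset.sum_sub_distrib, Finset.sum_ite_irrel,
    Finset.sum_ite_eq', Finset.mem_univ, if_true, Finset.sum_const_zero, ← Finset.sum_mul]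
  split_ifs <;> ring

theorem sum_apply_smul_of_orthonormal
    (hcard : Fintype.card ι + 1 = Fintype.card n ^ 2) (htr : ∀ a, (T a).trace = 0)
    (horth : ∀ a b, (T a * T b).trace = if a = b then (1 / 2 : 𝕜) else 0) (i j : n) :
    ∑ a, T a i j • T a =
      (2⁻¹ : 𝕜) • (single j i 1 - ((Fintype.card n : 𝕜)⁻¹ * if i = j then 1 else 0) • 1) := by
  have h := sum_trace_mul_smul_of_orthonormal hcard htr horth (single j i 1)
  simp only [trace_single_mul, one_smul] at h
  rw [h]
  congr 4
  split_ifs with hij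
  · rw [hij, trace_single_eq_same]
  · exact trace_single_eq_of_ne _ _ _ (Ne.symm hij)

end Completeness

theorem card_fin_sq_sub_one_add_one {N : ℕ} (hN : 0 < N) :
    Fintype.card (Fin (N ^ 2 - 1)) + 1 = Fintype.card (Fin N) ^ 2 := by
  simpa using Nat.sub_add_cancel (Nat.one_le_pow 2 N hN)

theorem sum_fConst_smul {N : ℕ} (hN : 0 < N)
    {T : Fin (N ^ 2 - 1) → Matrix (Fin N) (Fin N) ℂ} (htr : ∀ a, (T a).trace = 0)
    (horth : ∀ a b, (T a * T b).trace = if a = b then (1 / 2 : ℂ) else 0)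
    (a b : Fin (N ^ 2 - 1)) :
    ∑ c, fConst T a b c • T c = -Complex.I • (T a * T b - T b * T a) := by
  have hcard := card_fin_sq_sub_one_add_one hN
  have hcomm : (T a * T b - T b * T a).trace = 0 := by
    rw [trace_sub, trace_mul_comm, sub_self]
  simp_rw [fConst, mul_smul, ← Finset.smul_sum, sum_trace_mul_smul_of_orthonormal hcard htr horth,
    hcomm]
  module

theorem suN_f_contraction_general (N : ℕ)
    (T : Fin (N ^ 2 - 1) → Matrix (Fin N) (Fin N) ℂ)
    (htr : ∀ a, (T a).trace = 0)
    (horth : ∀ a b, (T a * T b).trace = if a = b then (1 / 2 : ℂ) else 0)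
    (i₁ i₂ i₃ j₁ j₂ j₃ : Fin N) :
    ∑ a, ∑ b, ∑ c, fConst T a b c * T a i₁ j₁ * T b i₂ j₂ * T c i₃ j₃ =
      (Complex.I / 4) *
        ((if i₁ = j₃ then 1 else 0) * (if i₂ = j₁ then 1 else 0) * (if i₃ = j₂ then 1 else 0)
          - (if i₁ = j₂ then 1 else 0) * (if i₂ = j₃ then 1 else 0) *
              (if i₃ = j₁ then 1 else 0)) := by
  have hcard := card_fin_sq_sub_one_add_one i₁.pos
  calc _ = (∑ a, ∑ b, (T a i₁ j₁ * T b i₂ j₂) • ∑ c, fConst T a b c • T c) i₃ j₃ := by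
        simp only [Matrix.sum_apply, Matrix.smul_apply, smul_eq_mul, Finset.mul_sum]
        exact Fintype.sum_congr _ _ fun a ↦ Fintype.sum_congr _ _ fun b ↦
          Fintype.sum_congr _ _ fun c ↦ by ring
    _ = (-Complex.I • ((∑ a, T a i₁ j₁ • T a) * (∑ b, T b i₂ j₂ • T b)
          - (∑ b, T b i₂ j₂ • T b) * (∑ a, T a i₁ j₁ • T a))) i₃ j₃ := by
        simp only [sum_fConst_smul i₁.pos htr horth, commutator_sum_smul_sum_smul,
          Finset.smul_sum, smul_comm (-Complex.I)]
    _ = ((-Complex.I / 4) • (single j₁ i₁ (1 : ℂ) * single j₂ i₂ (1 : ℂ)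
          - single j₂ i₂ (1 : ℂ) * single j₁ i₁ (1 : ℂ))) i₃ j₃ := by
        rw [sum_apply_smul_of_orthonormal hcard htr horth,
          sum_apply_smul_of_orthonormal hcard htr horth, smul_mul_smul_comm, smul_mul_smul_comm,
          ← smul_sub, commutator_sub_smul_one, smul_smul]
        norm_num [div_eq_mul_inv]
    _ = _ := by
        simp only [Matrix.smul_apply, Matrix.sub_apply, single_mul_single_apply, smul_eq_mul,
          mul_one]
        grind

/-- **Contraction of three su(N) generators with the structure constants f.** -/
theorem suN_f_contraction (N : ℕ) (hN : 2 ≤ N)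
    (T : Fin (N ^ 2 - 1) → Matrix (Fin N) (Fin N) ℂ)
    (htr : ∀ a, (T a).trace = 0)
    (hherm : ∀ a, (T a)ᴴ = T a)
    (horth : ∀ a b, (T a * T b).trace = if a = b then (1 / 2 : ℂ) else 0)
    (i₁ i₂ i₃ j₁ j₂ j₃ : Fin N) :
    ∑ a, ∑ b, ∑ c, fConst T a b c * T a i₁ j₁ * T b i₂ j₂ * T c i₃ j₃ =
      (Complex.I / 4) *
        ((if i₁ = j₃ then 1 else 0) * (if i₂ = j₁ then 1 else 0) * (if i₃ = j₂ then 1 else 0)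
          - (if i₁ = j₂ then 1 else 0) * (if i₂ = j₃ then 1 else 0) *
              (if i₃ = j₁ then 1 else 0)) :=
  suN_f_contraction_general N T htr horth i₁ i₂ i₃ j₁ j₂ j₃
end

section
/- Let δ : Fin 4 → Matrix (Fin 4) (Fin 4) ℂ be any family of 4×4 complex matrices satisfying the Clifford relations δ μ * δ ν + δ ν * δ μ = 2·(η μ ν)·1 with η = diag(1,−1,−1,−1), and set δ5 := i·δ 0 * δ 1 * δ 2 * δ 3. Then the sixteen matrices consisting of the identity 1, the four matrices δ μ (μ ∈ Fin 4), the six products δ μ * δ ν with μ < ν, the four matrices δ5 * δ μ (μ ∈ Fin 4), and δ5, form a basis of Matrix (Fin 4) (Fin 4) ℂ as a ℂ-vector space: they are linearly independent over ℂ and their span is all of Matrix (Fin 4) (Fin 4) ℂ. -/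
/-!
Up to a nonzero scalar, each of the sixteen matrices is an ordered product of generators `δ μ`,
and the sixteen words have pairwise distinct parity patterns. If some generator occurs an odd
number of times in a word, then, because the number of generators is even, some `δ ν`
anticommutes with the product, and conjugating by `δ ν` shows that its trace vanishes. Hence the
sixteen matrices are pairwise orthogonal for the trace form `tr (X * Y)`, while each squares to a
nonzero multiple of `1`. So they are linearly independent, and sixteen of them span the
16-dimensional space.
-/

noncomputable section

open Complex Matrix

/-- The Minkowski metric η = diag(1, −1, −1, −1) (entries as complex numbers). -/
def ηc (μ ν : Fin 4) : ℂ :=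
  if μ = ν then (if μ = 0 then 1 else -1) else 0

/-- δ⁵ = i·δ⁰δ¹δ²δ³ for a family of Clifford matrices δ. -/
def delta5 (δ : Fin 4 → Matrix (Fin 4) (Fin 4) ℂ) : Matrix (Fin 4) (Fin 4) ℂ :=
  I • (δ 0 * δ 1 * δ 2 * δ 3)

/-- The sixteen matrices 1, δ^μ, δ^μ·δ^ν (μ < ν), δ⁵·δ^μ, δ⁵ built from a
Clifford family δ, indexed by a type of cardinality 1 + 4 + 6 + 4 + 1 = 16. -/
def cliffordBasis (δ : Fin 4 → Matrix (Fin 4) (Fin 4) ℂ) :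
    Unit ⊕ Fin 4 ⊕ {p : Fin 4 × Fin 4 // p.1 < p.2} ⊕ Fin 4 ⊕ Unit →
      Matrix (Fin 4) (Fin 4) ℂ
  | Sum.inl _ => 1
  | Sum.inr (Sum.inl μ) => δ μ
  | Sum.inr (Sum.inr (Sum.inl p)) => δ p.val.1 * δ p.val.2
  | Sum.inr (Sum.inr (Sum.inr (Sum.inl μ))) => delta5 δ * δ μ
  | Sum.inr (Sum.inr (Sum.inr (Sum.inr _))) => delta5 δ

theorem isUnit_of_mul_self_eq_smul_one {K R : Type*} [Field K] [Ring R] [Algebra K R] {u : R}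
    {c : K} (hc : c ≠ 0) (h : u * u = c • 1) : IsUnit u :=
  have hinv : (c⁻¹ • u) * u = 1 := by
    rw [smul_mul_assoc, h, smul_smul, inv_mul_cancel₀ hc, one_smul]
  ⟨⟨u, c⁻¹ • u, by rwa [mul_smul_comm, ← smul_mul_assoc], hinv⟩, rfl⟩

theorem exists_odd_length_add_count {ι : Type*} [Fintype ι] [DecidableEq ι]
    (hι : Even (Fintype.card ι)) {l : List ι} (h : ∃ i, Odd (l.count i)) :
    ∃ j, Odd (l.length + l.count j) := by
  by_contra! hall
  have hpar (j : ι) : Even l.length ↔ Even (l.count j) :=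
    Nat.even_add.mp (Nat.not_odd_iff_even.mp (hall j))
  obtain ⟨i, hi⟩ := h
  have hlen : ¬Even l.length := fun he => Nat.not_even_iff_odd.mpr hi ((hpar i).mp he)
  have hsum : ∑ j, l.count j = l.length := by
    simpa using Multiset.sum_count_eq_card (s := Finset.univ) (m := (l : Multiset ι)) (by simp)
  have hodd (j : ι) : Odd (l.count j) := Nat.not_even_iff_odd.mp fun he => hlen ((hpar j).mpr he)
  apply hlen
  rw [← hsum, Finset.even_sum_iff_even_card_odd, Finset.filter_true_of_mem fun j _ => hodd j]
  exact hι

section Anticommuting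

variable {ι R : Type*} [DecidableEq ι] [Ring R] {δ : ι → R}
  (hanti : ∀ i j, i ≠ j → δ i * δ j = -(δ j * δ i))
include hanti

theorem mul_list_prod_map_of_anticomm (i : ι) (l : List ι) :
    δ i * (l.map δ).prod = (-1 : ℤ) ^ (l.length + l.count i) • ((l.map δ).prod * δ i) := by
  induction l with
  | nil => simp
  | cons a l ih =>
    rw [List.map_cons, List.prod_cons, List.length_cons]
    by_cases h : a = i
    · subst h
      rw [mul_assoc _ _ (δ a), ← mul_assoc, mul_assoc, ih, mul_smul_comm, ← mul_assoc,
        List.count_cons_self]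
      congr 1
      ring
    · rw [← mul_assoc, hanti i a (Ne.symm h), neg_mul, mul_assoc, ih, mul_smul_comm, ← mul_assoc,
        ← neg_smul, List.count_cons_of_ne h]
      congr 1
      ring

theorem list_prod_map_mul_self_of_anticomm {K : Type*} [Field K] [Algebra K R] {ε : ι → K}
    (hε : ∀ i, ε i ≠ 0) (hsq : ∀ i, δ i * δ i = ε i • 1) (l : List ι) :
    ∃ c : K, c ≠ 0 ∧ (l.map δ).prod * (l.map δ).prod = c • 1 := by
  induction l with
  | nil => exact ⟨1, one_ne_zero, by simp⟩
  | cons a l ih =>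
    obtain ⟨c, hc, hl⟩ := ih
    set s : ℤ := (-1) ^ (l.length + l.count a)
    have hs : s * s = 1 := by simp only [s, ← pow_add, ← two_mul, pow_mul]; simp
    have hcomm : (l.map δ).prod * δ a = s • (δ a * (l.map δ).prod) := by
      rw [mul_list_prod_map_of_anticomm hanti, smul_smul, hs, one_smul]
    refine ⟨s * ε a * c, by simp [s, hc, hε a], ?_⟩
    rw [List.map_cons, List.prod_cons, mul_assoc, ← mul_assoc _ (δ a), hcomm, smul_mul_assoc,
      mul_smul_comm, ← mul_assoc, ← mul_assoc, hsq, mul_assoc, hl, smul_mul_smul_comm, one_mul,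
      ← Int.cast_smul_eq_zsmul K, smul_smul, mul_assoc]

end Anticommuting

namespace Matrix

variable {m R : Type*} [Fintype m] [DecidableEq m] [CommRing R]

theorem trace_eq_zero_of_mul_eq_neg_mul [NoZeroDivisors R] [NeZero (2 : R)] {u X : Matrix m m R}
    (hu : IsUnit u) (h : u * X = -(X * u)) : X.trace = 0 := by
  obtain ⟨v, rfl⟩ := hu
  have hconj : trace ((v : Matrix m m R) * X * (↑v⁻¹ : Matrix m m R)) = -X.trace := by
    rw [h, neg_mul, mul_assoc, Units.mul_inv, mul_one, trace_neg]
  have h2 : (2 : R) * X.trace = 0 := by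
    linear_combination (trace_units_conj v X).symm.trans hconj
  exact (mul_eq_zero.mp h2).resolve_left two_ne_zero

theorem trace_list_prod_map_eq_zero {ι K : Type*} [Fintype ι] [DecidableEq ι] [Field K]
    [NeZero (2 : K)] {δ : ι → Matrix m m K} {ε : ι → K} (hι : Even (Fintype.card ι))
    (hanti : ∀ i j, i ≠ j → δ i * δ j = -(δ j * δ i)) (hε : ∀ i, ε i ≠ 0)
    (hsq : ∀ i, δ i * δ i = ε i • 1) {l : List ι} (hl : ∃ i, Odd (l.count i)) :
    ((l.map δ).prod).trace = 0 := by
  obtain ⟨j, hj⟩ := exists_odd_length_add_count hι hl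
  refine trace_eq_zero_of_mul_eq_neg_mul (isUnit_of_mul_self_eq_smul_one (hε j) (hsq j)) ?_
  rw [mul_list_prod_map_of_anticomm hanti, hj.neg_one_pow, neg_one_smul]

theorem linearIndependent_of_trace_mul {ι K : Type*} [Field K] {b : ι → Matrix m m K}
    (horth : ∀ i j, i ≠ j → (b i * b j).trace = 0) (hdiag : ∀ i, (b i * b i).trace ≠ 0) :
    LinearIndependent K b :=
  LinearMap.BilinForm.linearIndependent_of_iIsOrtho
    (B := (LinearMap.mul K (Matrix m m K)).compr₂ (traceLinearMap m K K)) horth hdiag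

end Matrix

abbrev CliffordIndex : Type := Unit ⊕ Fin 4 ⊕ {p : Fin 4 × Fin 4 // p.1 < p.2} ⊕ Fin 4 ⊕ Unit

def cliffordWord : CliffordIndex → List (Fin 4)
  | Sum.inl _ => []
  | Sum.inr (Sum.inl μ) => [μ]
  | Sum.inr (Sum.inr (Sum.inl p)) => [p.val.1, p.val.2]
  | Sum.inr (Sum.inr (Sum.inr (Sum.inl μ))) => [0, 1, 2, 3, μ]
  | Sum.inr (Sum.inr (Sum.inr (Sum.inr _))) => [0, 1, 2, 3]

def cliffordCoeff : CliffordIndex → ℂ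
  | Sum.inr (Sum.inr (Sum.inr _)) => I
  | _ => 1

theorem cliffordCoeff_ne_zero (A : CliffordIndex) : cliffordCoeff A ≠ 0 := by
  rcases A with _ | _ | _ | _ | _ <;> simp [cliffordCoeff]

theorem cliffordBasis_eq_smul_prod (δ : Fin 4 → Matrix (Fin 4) (Fin 4) ℂ) (A : CliffordIndex) :
    cliffordBasis δ A = cliffordCoeff A • ((cliffordWord A).map δ).prod := by
  rcases A with _ | _ | _ | _ | _ <;>
    simp [cliffordBasis, cliffordCoeff, cliffordWord, delta5, mul_assoc]

theorem exists_odd_count_cliffordWord_append {A B : CliffordIndex} (h : A ≠ B) :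
    ∃ i, Odd ((cliffordWord A ++ cliffordWord B).count i) := by
  have key : ∀ AB : CliffordIndex × CliffordIndex, AB.1 ≠ AB.2 →
      ∃ i, Odd ((cliffordWord AB.1 ++ cliffordWord AB.2).count i) := by
    decide +kernel
  exact key (A, B) h

theorem ηc_self_ne_zero (μ : Fin 4) : ηc μ μ ≠ 0 := by
  fin_cases μ <;> simp [ηc]

section CliffordFamily

variable {δ : Fin 4 → Matrix (Fin 4) (Fin 4) ℂ}
  (hanti : ∀ μ ν, μ ≠ ν → δ μ * δ ν = -(δ ν * δ μ)) (hsq : ∀ μ, δ μ * δ μ = ηc μ μ • 1)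
include hanti hsq

theorem trace_cliffordBasis_mul_of_ne {A B : CliffordIndex} (h : A ≠ B) :
    (cliffordBasis δ A * cliffordBasis δ B).trace = 0 := by
  rw [cliffordBasis_eq_smul_prod, cliffordBasis_eq_smul_prod, smul_mul_smul_comm,
    ← List.prod_append, ← List.map_append, trace_smul,
    trace_list_prod_map_eq_zero ⟨2, rfl⟩ hanti ηc_self_ne_zero hsq
      (exists_odd_count_cliffordWord_append h), smul_zero]

theorem trace_cliffordBasis_mul_self_ne_zero (A : CliffordIndex) :
    (cliffordBasis δ A * cliffordBasis δ A).trace ≠ 0 := by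
  obtain ⟨c, hc, hprod⟩ :=
    list_prod_map_mul_self_of_anticomm hanti ηc_self_ne_zero hsq (cliffordWord A)
  rw [cliffordBasis_eq_smul_prod, smul_mul_smul_comm, hprod, smul_smul, trace_smul, trace_one]
  simp [cliffordCoeff_ne_zero, hc]

end CliffordFamily

/-- **Any family of matrices satisfying the Clifford relations generates a basis
of the 4×4 complex matrices** consisting of 1, δ^μ, δ^μδ^ν (μ<ν), δ⁵δ^μ and δ⁵. -/
theorem clifford_basis_of_matrices (δ : Fin 4 → Matrix (Fin 4) (Fin 4) ℂ)
    (hcliff : ∀ μ ν, δ μ * δ ν + δ ν * δ μ = (2 * ηc μ ν) • (1 : Matrix (Fin 4) (Fin 4) ℂ)) :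
    LinearIndependent ℂ (cliffordBasis δ) ∧
      Submodule.span ℂ (Set.range (cliffordBasis δ)) = ⊤ := by
  have hanti (μ ν : Fin 4) (h : μ ≠ ν) : δ μ * δ ν = -(δ ν * δ μ) :=
    eq_neg_of_add_eq_zero_left (by simpa [ηc, h] using hcliff μ ν)
  have hsq (μ : Fin 4) : δ μ * δ μ = ηc μ μ • 1 := by
    have h := hcliff μ μ
    rw [mul_smul, ← two_smul ℂ (δ μ * δ μ)] at h
    exact smul_right_injective _ two_ne_zero h
  have hli : LinearIndependent ℂ (cliffordBasis δ) :=
    Matrix.linearIndependent_of_trace_mul (fun _ _ => trace_cliffordBasis_mul_of_ne hanti hsq)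
      (trace_cliffordBasis_mul_self_ne_zero hanti hsq)
  refine ⟨hli, hli.span_eq_top_of_card_eq_finrank ?_⟩
  rw [Module.finrank_matrix, Module.finrank_self, Fintype.card_fin]
  decide
end
end
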